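/- arXiv:2306.05371 — 2 statements merged into one kernel-verified Lean document; each statement's English description precedes it below -/
import Mathlib

section
/- For all real numbers a, b with a > 0, b > -1, b ≠ 0, b ≠ a, and every nonnegative integer n, the terminating hypergeometric sum ₃F₂(-n, a, b; a+1, b+1; 1) = Σ_{k=0}^{n} [(-n)_k (a)_k (b)_k] / [(a+1)_k (b+1)_k k!] equals (n!/(b-a)) · ( b/(a+1)_n − a/(b+1)_n ), where (x)_k denotes the Pochhammer symbol (rising factorial). -/
noncomputable def poch (a : ℝ) (k : ℕ) : ℝ := ∏ i ∈ Finset.range k, (a + i)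

lemma poch_zero (a : ℝ) : poch a 0 = 1 := by simp [poch]

lemma poch_succ (a : ℝ) (k : ℕ) : poch a (k + 1) = poch a k * (a + k) :=
  Finset.prod_range_succ _ _

lemma poch_succ' (a : ℝ) (k : ℕ) : poch a (k + 1) = a * poch (a + 1) k := by
  rw [poch, Finset.prod_range_succ']
  simp only [Nat.cast_zero, add_zero]
  rw [mul_comm, poch]
  congr 1
  refine Finset.prod_congr rfl fun i _ => ?_
  push_cast; ring

lemma poch_ne_zero {a : ℝ} {k : ℕ} (h : ∀ i, i < k → a + i ≠ 0) : poch a k ≠ 0 := by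
  rw [poch, Finset.prod_ne_zero_iff]
  exact fun i hi => h i (Finset.mem_range.mp hi)

lemma poch_pos {a : ℝ} (ha : 0 < a) (k : ℕ) : 0 < poch a k := by
  apply Finset.prod_pos
  intro i _
  positivity

lemma poch_neg_nat (n k : ℕ) (hk : k ≤ n) :
    poch (-(n : ℝ)) k = (-1) ^ k * (n.descFactorial k : ℝ) := by
  induction k with
  | zero => simp [poch_zero]
  | succ k ih =>
    have hk' : k ≤ n := Nat.le_of_succ_le hk
    rw [poch_succ, ih hk', Nat.descFactorial_succ]
    have : ((n - k : ℕ) : ℝ) = (n : ℝ) - k := by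
      rw [Nat.cast_sub hk']
    push_cast [this]
    ring

lemma sum_inv (n : ℕ) : ∀ x : ℝ, (∀ i : ℕ, i ≤ n → x + i ≠ 0) →
    ∑ k ∈ Finset.range (n + 1), (-1 : ℝ) ^ k * (n.choose k : ℝ) / (x + k) =
      (n.factorial : ℝ) / poch x (n + 1) := by
  induction n with
  | zero =>
    intro x hx
    have := hx 0 le_rfl
    simp only [Nat.cast_zero, add_zero] at this
    simp [poch_succ, poch_zero]
  | succ n ih =>
    intro x hx
    have hx0 : x ≠ 0 := by have := hx 0 (Nat.zero_le _); simpa using this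
    have hxs : x + (n + 1 : ℕ) ≠ 0 := hx (n + 1) le_rfl
    set g : ℕ → ℝ := fun k => (-1 : ℝ) ^ k * (n.choose k : ℝ) / (x + k) with hg
    have key : ∑ k ∈ Finset.range (n + 2), (-1 : ℝ) ^ k * ((n+1).choose k : ℝ) / (x + k)
        = (∑ k ∈ Finset.range (n + 1), g k)
          - ∑ k ∈ Finset.range (n + 1), (-1 : ℝ) ^ k * (n.choose k : ℝ) / ((x + 1) + k) := by
      rw [Finset.sum_range_succ' (fun k => (-1 : ℝ) ^ k * ((n+1).choose k : ℝ) / (x + k))]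
      have hsplit : ∀ k ∈ Finset.range (n + 1),
          (-1 : ℝ) ^ (k + 1) * ((n+1).choose (k+1) : ℝ) / (x + (k + 1 : ℕ))
          = g (k + 1) - (-1 : ℝ) ^ k * (n.choose k : ℝ) / ((x + 1) + k) := by
        intro k hkmem
        have hklt := Finset.mem_range.mp hkmem
        rw [Nat.choose_succ_succ]
        have hne : x + ((k : ℝ) + 1) ≠ 0 := by
          have := hx (k + 1) (by omega)
          push_cast at this
          exact this
        rw [hg]
        push_cast
        have : (x + 1) + (k : ℝ) = x + ((k:ℝ) + 1) := by ring
        rw [this]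
        field_simp
        ring
      rw [Finset.sum_congr rfl hsplit, Finset.sum_sub_distrib]
      have hgsum : ∑ k ∈ Finset.range (n + 1), g (k + 1)
          = (∑ k ∈ Finset.range (n + 1), g k) - g 0 := by
        have h1 : ∑ k ∈ Finset.range (n + 2), g k
            = (∑ k ∈ Finset.range (n + 1), g (k + 1)) + g 0 :=
          Finset.sum_range_succ' g (n + 1)
        have h2 : ∑ k ∈ Finset.range (n + 2), g k
            = (∑ k ∈ Finset.range (n + 1), g k) + g (n + 1) :=
          Finset.sum_range_succ g (n + 1)
        have h3 : g (n + 1) = 0 := by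
          simp [hg, Nat.choose_succ_self]
        rw [h3, add_zero] at h2
        linarith [h1.symm.trans h2]
      rw [hgsum]
      have hg0 : g 0 = 1 / x := by simp [hg]
      simp only [hg0, Nat.cast_zero, add_zero, pow_zero, Nat.choose_zero_right, Nat.cast_one]
      ring
    rw [key]
    have h1 : ∑ k ∈ Finset.range (n + 1), g k = (n.factorial : ℝ) / poch x (n + 1) :=
      ih x (fun i hi => hx i (by omega))
    have h2 : ∑ k ∈ Finset.range (n + 1), (-1 : ℝ) ^ k * (n.choose k : ℝ) / ((x + 1) + k)
        = (n.factorial : ℝ) / poch (x + 1) (n + 1) := by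
      apply ih
      intro i hi
      have h := hx (i + 1) (by omega)
      push_cast at h
      have e : x + 1 + (i : ℝ) = x + ((i : ℝ) + 1) := by ring
      rw [e]; exact h
    rw [h1, h2]
    have hp : poch x (n + 1) ≠ 0 :=
      poch_ne_zero (fun i hi => hx i (by omega))
    have e1 : poch x (n + 2) = poch x (n + 1) * (x + (n + 1 : ℕ)) := poch_succ x (n + 1)
    have e2 : poch x (n + 2) = x * poch (x + 1) (n + 1) := poch_succ' x (n + 1)
    have hp2 : poch (x + 1) (n + 1) = poch x (n + 1) * (x + (n + 1 : ℕ)) / x := by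
      rw [← e1, e2]; field_simp
    rw [hp2, e1]
    have hfac : ((n + 1).factorial : ℝ) = (n + 1) * n.factorial := by
      push_cast [Nat.factorial_succ]; ring
    push_cast [hfac] at *
    field_simp
    ring

/-- ₃F₂(-n, a, b; a+1, b+1; 1) = (n!/(b-a)) (b/(a+1)_n − a/(b+1)_n). -/
theorem threeF_two_eval_one (a b : ℝ) (ha : 0 < a) (hb : -1 < b) (hb0 : b ≠ 0)
    (hab : b ≠ a) (n : ℕ) :
    ∑ k ∈ Finset.range (n + 1),
      poch (-(n : ℝ)) k * poch a k * poch b k /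
        (poch (a + 1) k * poch (b + 1) k * (Nat.factorial k)) =
    ((Nat.factorial n : ℝ) / (b - a)) * (b / poch (a + 1) n - a / poch (b + 1) n) := by
  have ha0 : a ≠ 0 := ne_of_gt ha
  have hba : b - a ≠ 0 := sub_ne_zero.mpr hab
  have hbk : ∀ i : ℕ, b + i ≠ 0 := by
    intro i
    cases i with
    | zero => simpa using hb0
    | succ m =>
      have hm : (0:ℝ) ≤ (m : ℝ) := Nat.cast_nonneg m
      have : (0:ℝ) < b + ((m:ℕ)+1 : ℕ) := by push_cast; linarith
      exact ne_of_gt this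
  have hak : ∀ i : ℕ, a + i ≠ 0 := fun i => by positivity
  -- per-term rewrite
  have hterm : ∀ k ∈ Finset.range (n + 1),
      poch (-(n : ℝ)) k * poch a k * poch b k /
        (poch (a + 1) k * poch (b + 1) k * (Nat.factorial k))
      = (a * b / (b - a)) *
          ((-1 : ℝ) ^ k * (n.choose k : ℝ) / (a + k)
            - (-1 : ℝ) ^ k * (n.choose k : ℝ) / (b + k)) := by
    intro k hk
    have hkn : k ≤ n := Nat.lt_succ_iff.mp (Finset.mem_range.mp hk)
    rw [poch_neg_nat n k hkn, Nat.descFactorial_eq_factorial_mul_choose]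
    have hpa : poch (a + 1) k = poch a k * (a + k) / a := by
      have := (poch_succ a k).symm.trans (poch_succ' a k)
      field_simp
      linarith [this]
    have hpb : poch (b + 1) k = poch b k * (b + k) / b := by
      have := (poch_succ b k).symm.trans (poch_succ' b k)
      field_simp
      linarith [this]
    have hpan : poch a k ≠ 0 := ne_of_gt (poch_pos ha k)
    have hpbn : poch b k ≠ 0 := poch_ne_zero (fun i _ => hbk i)
    have hfk : (Nat.factorial k : ℝ) ≠ 0 := Nat.cast_ne_zero.mpr (Nat.factorial_ne_zero k)
    have hakk : a + (k : ℝ) ≠ 0 := hak k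
    have hbkk : b + (k : ℝ) ≠ 0 := hbk k
    rw [hpa, hpb]
    push_cast
    field_simp
    ring
  rw [Finset.sum_congr rfl hterm, ← Finset.mul_sum, Finset.sum_sub_distrib]
  rw [sum_inv n a (fun i _ => hak i), sum_inv n b (fun i _ => hbk i)]
  have ea : poch a (n + 1) = a * poch (a + 1) n := poch_succ' a n
  have eb : poch b (n + 1) = b * poch (b + 1) n := poch_succ' b n
  rw [ea, eb]
  have haN : a + (1:ℝ) > 0 := by linarith
  have hbN : b + (1:ℝ) > 0 := by linarith
  have hpan : poch (a + 1) n ≠ 0 := ne_of_gt (poch_pos (by linarith) n)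
  have hpbn : poch (b + 1) n ≠ 0 := ne_of_gt (poch_pos (by linarith) n)
  field_simp
end

section
/- Let β > 0, c > 0, c ≠ 1, γ ≥ 0 with γ + β > 0, and x real. Define the associated Meixner polynomials 𝓜_n(x; β, c, γ) by the recurrence c·𝓜_{n+1} = [(c−1)x + (c+1)(n+γ) + βc]·𝓜_n − (n+γ)(n+γ+β−1)·𝓜_{n−1} with 𝓜_{−1} = 0, 𝓜_0 = 1. Then for all n ≥ 0, 𝓜_n(x; β, c, γ) = c^{−n} · 𝓜_n(−β−x; β, c^{−1}, γ). -/
/-- The associated Meixner polynomials, defined by their three-term recurrence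
(with association parameter γ and the convention 𝓜₋₁ = 0, 𝓜₀ = 1). -/
def IsAssocMeixner (β c γ : ℝ) (M : ℕ → ℝ → ℝ) : Prop :=
  (∀ x, M 0 x = 1) ∧
  (∀ x, c * M 1 x = (c - 1) * x + (c + 1) * γ + β * c) ∧
  (∀ x, ∀ n : ℕ,
    c * M (n + 2) x =
      ((c - 1) * x + (c + 1) * ((n : ℝ) + 1 + γ) + β * c) * M (n + 1) x -
        ((n : ℝ) + 1 + γ) * ((n : ℝ) + 1 + γ + β - 1) * M n x)

theorem assoc_meixner_reflection (β c γ : ℝ) (hβ : 0 < β) (hc : 0 < c) (hc1 : c ≠ 1)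
    (hγ : 0 ≤ γ) (hγβ : 0 < γ + β)
    (M M' : ℕ → ℝ → ℝ) (hM : IsAssocMeixner β c γ M) (hM' : IsAssocMeixner β c⁻¹ γ M') :
    ∀ (n : ℕ) (x : ℝ), M n x = c ^ (-(n : ℤ)) * M' n (-β - x) := by
  obtain ⟨h0, h1, h2⟩ := hM
  obtain ⟨h0', h1', h2'⟩ := hM'
  have hc0 : c ≠ 0 := ne_of_gt hc
  intro n x
  induction n using Nat.twoStepInduction with
  | zero => simp [h0, h0']
  | one =>
    have e1 := h1 x
    have e1' := h1' (-β - x)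
    push_cast
    rw [zpow_neg, zpow_one]
    field_simp at e1' ⊢
    linarith [e1, e1']
  | more n ih ih1 =>
    have e2 := h2 x n
    have e2' := h2' (-β - x) n
    rw [ih, ih1] at e2
    have hpow1 : c ^ (-(((n:ℕ)+1) : ℤ)) = c ^ (-(n:ℤ)) * c⁻¹ := by
      rw [show (-(((n:ℕ)+1):ℤ)) = (-(n:ℤ)) + (-1) by push_cast; ring, zpow_add₀ hc0, zpow_neg_one]
    have hpow2 : c ^ (-(((n:ℕ)+2) : ℤ)) = c ^ (-(n:ℤ)) * c⁻¹ * c⁻¹ := by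
      rw [show (-(((n:ℕ)+2):ℤ)) = (-(n:ℤ)) + (-1) + (-1) by push_cast; ring, zpow_add₀ hc0,
        zpow_add₀ hc0, zpow_neg_one]
    push_cast at e2
    rw [hpow1] at e2
    push_cast
    push_cast at hpow2
    rw [hpow2]
    have hinv : c * c⁻¹ = 1 := mul_inv_cancel₀ hc0
    -- from e2 : c * M (n+2) x = ...
    have key : M (n + 2) x = c⁻¹ * (((c - 1) * x + (c + 1) * ((n : ℝ) + 1 + γ) + β * c) *
        (c ^ (-(n:ℤ)) * c⁻¹ * M' (n + 1) (-β - x)) -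
        ((n : ℝ) + 1 + γ) * ((n : ℝ) + 1 + γ + β - 1) * (c ^ (-(n:ℤ)) * M' n (-β - x))) := by
      field_simp at e2 ⊢
      linarith [e2]
    rw [key]
    have key' : M' (n + 2) (-β - x) = c * (((c⁻¹ - 1) * (-β - x) + (c⁻¹ + 1) * ((n : ℝ) + 1 + γ) + β * c⁻¹) *
        M' (n + 1) (-β - x) -
        ((n : ℝ) + 1 + γ) * ((n : ℝ) + 1 + γ + β - 1) * M' n (-β - x)) := by
      rw [← e2']
      field_simp
    rw [key']
    field_simp
    ring
end
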